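/- arXiv:2412.19258 — 3 statements merged into one kernel-verified Lean document; each statement's English description precedes it below -/
import Mathlib

section
/- For any two nontrivial connected finite simple graphs G and H, the cycle hull number of the strong product G ⊠ H equals 2. -/
open SimpleGraph

variable {V α β : Type*}

/-- A set `S` is cycle convex in `G` if no vertex outside `S` lies on a cycle in the
subgraph induced by `S ∪ {w}`. -/
def CycleConvex (G : SimpleGraph V) (S : Set V) : Prop :=
  ∀ w : V, w ∉ S →
    ∀ c : (G.induce (insert w S)).Walk ⟨w, Set.mem_insert w S⟩ ⟨w, Set.mem_insert w S⟩,
      ¬ c.IsCycle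

/-- The cycle convex hull of `S`: the smallest cycle convex set containing `S`. -/
def cycleHull (G : SimpleGraph V) (S : Set V) : Set V :=
  ⋂₀ {T : Set V | S ⊆ T ∧ CycleConvex G T}

/-- The cycle hull number: minimum size of a set whose cycle convex hull is everything. -/
noncomputable def cycleHullNumber (G : SimpleGraph V) : ℕ :=
  sInf {n : ℕ | ∃ S : Set V, S.ncard = n ∧ cycleHull G S = Set.univ}

/-- The cycle convexity number: maximum size of a proper cycle convex set. -/
noncomputable def cycleConvexityNumber (G : SimpleGraph V) : ℕ :=
  sSup {n : ℕ | ∃ S : Set V, S.ncard = n ∧ CycleConvex G S ∧ S ≠ Set.univ}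

/-- The independence number of a graph. -/
noncomputable def indepNumber (G : SimpleGraph V) : ℕ :=
  sSup {n : ℕ | ∃ S : Set V, S.ncard = n ∧ S.Pairwise fun a b => ¬ G.Adj a b}

/-- The strong product of two simple graphs. -/
def strongProd (G : SimpleGraph α) (H : SimpleGraph β) : SimpleGraph (α × β) where
  Adj x y := (G.Adj x.1 y.1 ∧ x.2 = y.2) ∨ (x.1 = y.1 ∧ H.Adj x.2 y.2) ∨
    (G.Adj x.1 y.1 ∧ H.Adj x.2 y.2)
  symm := ⟨fun x y h => by
    rcases h with ⟨h1, h2⟩ | ⟨h1, h2⟩ | ⟨h1, h2⟩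
    · exact Or.inl ⟨h1.symm, h2.symm⟩
    · exact Or.inr (Or.inl ⟨h1.symm, h2.symm⟩)
    · exact Or.inr (Or.inr ⟨h1.symm, h2.symm⟩)⟩
  loopless := ⟨fun x h => by
    rcases h with ⟨h1, _⟩ | ⟨_, h2⟩ | ⟨h1, _⟩
    · exact G.irrefl h1
    · exact H.irrefl h2
    · exact G.irrefl h1⟩

/-- The lexicographic product of two simple graphs. -/
def lexProd (G : SimpleGraph α) (H : SimpleGraph β) : SimpleGraph (α × β) where
  Adj x y := G.Adj x.1 y.1 ∨ (x.1 = y.1 ∧ H.Adj x.2 y.2)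
  symm := ⟨fun x y h => by
    rcases h with h1 | ⟨h1, h2⟩
    · exact Or.inl h1.symm
    · exact Or.inr ⟨h1.symm, h2.symm⟩⟩
  loopless := ⟨fun x h => by
    rcases h with h1 | ⟨_, h2⟩
    · exact G.irrefl h1
    · exact H.irrefl h2⟩

/-!
A cycle convex set containing two adjacent vertices contains every common neighbour of them,
since the three vertices form a triangle. In `G ⊠ H`, starting from a diagonal edge
`(g₁, h₁)(g₂, h₂)`, such triangles first fill the two layers `α × {h₁, h₂}` along the edges of `G`,
and then every column along the edges of `H`. Conversely a set with at most one vertex is convex,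
because a cycle through an outside vertex `w` needs two further distinct vertices (the neighbours of
`w` on it), so its hull is itself.
-/

namespace SimpleGraph

variable {V : Type*} {G : SimpleGraph V}

lemma Walk.isCycle_triangle {a b c : V} (hab : G.Adj a b) (hbc : G.Adj b c) (hca : G.Adj c a) :
    (Walk.cons hab (.cons hbc (.cons hca .nil))).IsCycle := by
  simp [Walk.isCycle_def, Walk.isTrail_def, hab.ne, hbc.ne, hca.ne, hab.ne.symm, hca.ne.symm]

lemma Reachable.of_adj_closed {P : V → Prop} (hP : ∀ ⦃a b⦄, G.Adj a b → P a → P b) {u v : V}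
    (h : G.Reachable u v) (hu : P u) : P v := by
  rw [reachable_iff_reflTransGen] at h
  induction h with
  | refl => exact hu
  | tail _ hab ih => exact hP hab ih

end SimpleGraph

open SimpleGraph

section CycleConvexity

variable {V : Type*} {G : SimpleGraph V} {S T : Set V}

lemma CycleConvex.mem_of_adj_of_adj (hT : CycleConvex G T) {u v w : V} (hu : u ∈ T) (hv : v ∈ T)
    (huv : G.Adj u v) (hwu : G.Adj w u) (hwv : G.Adj w v) : w ∈ T := by
  by_contra hw
  exact hT w hw _ <| Walk.isCycle_triangle (G := G.induce (insert w T))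
    (a := ⟨w, Set.mem_insert w T⟩) (b := ⟨u, .inr hu⟩) (c := ⟨v, .inr hv⟩) hwu huv hwv.symm

lemma cycleConvex_of_subsingleton (hS : S.Subsingleton) : CycleConvex G S := by
  intro w _ c hc
  have hnil := hc.not_nil
  have hsnd : (c.snd : V) ∈ S :=
    c.snd.2.resolve_left fun h => (c.adj_snd hnil).ne (Subtype.ext h.symm)
  have hpen : (c.penultimate : V) ∈ S :=
    c.penultimate.2.resolve_left fun h => (c.adj_penultimate hnil).ne (Subtype.ext h)
  exact hc.snd_ne_penultimate (Subtype.ext (hS hsnd hpen))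

lemma cycleHull_subset (hST : S ⊆ T) (hT : CycleConvex G T) : cycleHull G S ⊆ T :=
  Set.sInter_subset_of_mem ⟨hST, hT⟩

lemma cycleHull_eq_univ (h : ∀ T, S ⊆ T → CycleConvex G T → T = Set.univ) :
    cycleHull G S = Set.univ :=
  Set.sInter_eq_univ.2 fun T ⟨hST, hT⟩ => h T hST hT

lemma two_le_ncard_of_cycleHull_eq_univ [Finite V] [Nontrivial V]
    (h : cycleHull G S = Set.univ) : 2 ≤ S.ncard := by
  by_contra! hS
  have hsub : S.Subsingleton := Set.ncard_le_one_iff_subsingleton.1 (by omega)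
  have hS_univ : S = Set.univ :=
    Set.univ_subset_iff.1 (h ▸ cycleHull_subset subset_rfl (cycleConvex_of_subsingleton hsub))
  exact not_subsingleton V (Set.subsingleton_univ_iff.1 (hS_univ ▸ hsub))

lemma cycleHullNumber_eq_two [Finite V] [Nontrivial V] (hS : S.ncard = 2)
    (h : cycleHull G S = Set.univ) : cycleHullNumber G = 2 :=
  le_antisymm (Nat.sInf_le ⟨S, hS, h⟩)
    (le_csInf ⟨2, S, hS, h⟩ fun _ ⟨_, hn, hS'⟩ => hn ▸ two_le_ncard_of_cycleHull_eq_univ hS')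

end CycleConvexity

section StrongProduct

variable {α β : Type*} {G : SimpleGraph α} {H : SimpleGraph β} {T : Set (α × β)}

lemma CycleConvex.strongProd_mem_of_adj_fst (hT : CycleConvex (strongProd G H) T)
    {g g' : α} {h h' : β} (hg : G.Adj g g') (hh : H.Adj h h') (hgh : (g, h) ∈ T)
    (hgh' : (g, h') ∈ T) : (g', h) ∈ T ∧ (g', h') ∈ T :=
  have hvert : (strongProd G H).Adj (g, h) (g, h') := .inr (.inl ⟨rfl, hh⟩)
  ⟨hT.mem_of_adj_of_adj hgh hgh' hvert (.inl ⟨hg.symm, rfl⟩) (.inr (.inr ⟨hg.symm, hh⟩)),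
    hT.mem_of_adj_of_adj hgh hgh' hvert (.inr (.inr ⟨hg.symm, hh.symm⟩)) (.inl ⟨hg.symm, rfl⟩)⟩

lemma CycleConvex.strongProd_mem_of_adj_snd (hT : CycleConvex (strongProd G H) T)
    {g g' : α} {h h' : β} (hg : G.Adj g g') (hh : H.Adj h h') (hgh : (g, h) ∈ T)
    (hg'h : (g', h) ∈ T) : (g, h') ∈ T ∧ (g', h') ∈ T :=
  have hhor : (strongProd G H).Adj (g, h) (g', h) := .inl ⟨hg, rfl⟩
  ⟨hT.mem_of_adj_of_adj hgh hg'h hhor (.inr (.inl ⟨rfl, hh.symm⟩)) (.inr (.inr ⟨hg, hh.symm⟩)),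
    hT.mem_of_adj_of_adj hgh hg'h hhor (.inr (.inr ⟨hg.symm, hh.symm⟩))
      (.inr (.inl ⟨rfl, hh.symm⟩))⟩

lemma CycleConvex.strongProd_eq_univ (hT : CycleConvex (strongProd G H) T)
    (hG : G.Preconnected) (hH : H.Preconnected) {g₁ g₂ : α} {h₁ h₂ : β} (hg : G.Adj g₁ g₂)
    (hh : H.Adj h₁ h₂) (h₁₁ : (g₁, h₁) ∈ T) (h₂₂ : (g₂, h₂) ∈ T) : T = Set.univ := by
  have h₁₂ : (g₁, h₂) ∈ T := hT.mem_of_adj_of_adj h₁₁ h₂₂ (.inr (.inr ⟨hg, hh⟩))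
    (.inr (.inl ⟨rfl, hh.symm⟩)) (.inl ⟨hg, rfl⟩)
  have hrow (g : α) : (g, h₁) ∈ T ∧ (g, h₂) ∈ T :=
    (hG g₁ g).of_adj_closed (fun _ _ hab hP => hT.strongProd_mem_of_adj_fst hab hh hP.1 hP.2)
      ⟨h₁₁, h₁₂⟩
  have := hg.nontrivial
  refine Set.eq_univ_of_forall fun ⟨g, h⟩ => ?_
  obtain ⟨g', hgg'⟩ := hG.exists_adj_of_nontrivial g
  exact ((hH h₁ h).of_adj_closed (P := fun h => (g, h) ∈ T ∧ (g', h) ∈ T)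
    (fun _ _ hab hP => hT.strongProd_mem_of_adj_snd hgg' hab hP.1 hP.2)
    ⟨(hrow g).1, (hrow g').1⟩).1

lemma cycleHull_strongProd_pair (hG : G.Preconnected) (hH : H.Preconnected) {g₁ g₂ : α}
    {h₁ h₂ : β} (hg : G.Adj g₁ g₂) (hh : H.Adj h₁ h₂) :
    cycleHull (strongProd G H) {(g₁, h₁), (g₂, h₂)} = Set.univ :=
  cycleHull_eq_univ fun _ hST hT =>
    hT.strongProd_eq_univ hG hH hg hh (hST (.inl rfl)) (hST (.inr rfl))

end StrongProduct

theorem stmt_0 [Fintype α] [Fintype β] (G : SimpleGraph α) (H : SimpleGraph β)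
    [Nontrivial α] [Nontrivial β] (hG : G.Connected) (hH : H.Connected) :
    cycleHullNumber (strongProd G H) = 2 := by
  obtain ⟨g₂, hg⟩ := hG.preconnected.exists_adj_of_nontrivial (Classical.arbitrary α)
  obtain ⟨h₂, hh⟩ := hH.preconnected.exists_adj_of_nontrivial (Classical.arbitrary β)
  exact cycleHullNumber_eq_two (Set.ncard_pair (by simp [hg.ne]))
    (cycleHull_strongProd_pair hG.preconnected hH.preconnected hg hh)
end

section
/- Let G and H be nontrivial connected graphs. If S is a cycle convex set in G and T is a cycle convex set in H, then S × T is a cycle convex set in the Cartesian product G □ H. -/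
open SimpleGraph

variable {V α β : Type*}

/-! A vertex `w ∉ S` lies on a cycle of `G[S ∪ {w}]` exactly when two distinct neighbours of `w`
are joined by a walk inside `S`. If `(a, b) ∉ S × T`, say `a ∉ S`, then its neighbours in `S × T`
are of the form `(u, b)` with `u ∈ S` adjacent to `a`, and projecting a walk inside `S × T` to the
first factor gives a walk inside `S`; so a cycle through `(a, b)` would yield one through `a`. -/

namespace SimpleGraph

variable {G : SimpleGraph V}

lemma Walk.exists_mem_support_of_mem_support_map {W : Type*} {G' : SimpleGraph W} (f : G →g G')
    {u v : V} (p : G.Walk u v) {x : W} (hx : x ∈ (p.map f).support) :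
    ∃ y ∈ p.support, f y = x :=
  List.mem_map.1 (p.support_map f ▸ hx)

lemma exists_isCycle_induce_iff {s : Set V} {v : V} (hv : v ∈ s) :
    (∃ c : (G.induce s).Walk ⟨v, hv⟩ ⟨v, hv⟩, c.IsCycle) ↔
      ∃ c : G.Walk v v, c.IsCycle ∧ ∀ x ∈ c.support, x ∈ s := by
  have hinj : Function.Injective (Embedding.induce (G := G) s).toHom := Subtype.val_injective
  constructor
  · rintro ⟨c, hc⟩
    refine ⟨c.map (Embedding.induce s).toHom, hc.map hinj, fun x hx => ?_⟩
    obtain ⟨y, -, rfl⟩ := c.exists_mem_support_of_mem_support_map _ hx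
    exact y.2
  · rintro ⟨c, hc, hcs⟩
    refine ⟨c.induce s hcs, ?_⟩
    rw [← Walk.isCycle_map_iff_of_injective hinj, Walk.map_induce]
    exact hc

lemma exists_isCycle_insert_iff {S : Set V} {w : V} (hw : w ∉ S) :
    (∃ c : G.Walk w w, c.IsCycle ∧ ∀ x ∈ c.support, x ∈ insert w S) ↔
      ∃ u v, u ≠ v ∧ G.Adj w u ∧ G.Adj w v ∧ ∃ p : G.Walk u v, ∀ x ∈ p.support, x ∈ S := by
  constructor
  · rintro ⟨_ | ⟨hwu, q⟩, hc, hcS⟩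
    · exact absurd rfl hc.ne_nil
    have hq : ¬ q.Nil := Walk.not_nil_of_ne hwu.ne.symm
    refine ⟨_, q.penultimate, ?_, hwu, (q.adj_penultimate hq).symm, q.dropLast, fun x hx => ?_⟩
    · simpa [Walk.penultimate_cons_of_not_nil _ _ hq] using hc.snd_ne_penultimate
    have hnodup := ((Walk.cons_isCycle_iff q hwu).1 hc).1.support_nodup
    rw [← Walk.support_dropLast_concat hq, List.nodup_append] at hnodup
    have hxw : x ≠ w := by
      rintro rfl
      exact hnodup.2.2 x hx x (List.mem_singleton_self x) rfl
    have hxq : x ∈ q.support := by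
      rw [← Walk.support_dropLast_concat hq]
      exact List.mem_append_left _ hx
    exact (hcS x (by simp [hxq])).resolve_left hxw
  · rintro ⟨u, v, huv, hwu, hwv, p, hpS⟩
    classical
    set P := p.toPath
    have hPS : ∀ x ∈ P.1.support, x ∈ S := fun x hx => hpS x (p.support_toPath_subset_support hx)
    have hwP : w ∉ P.1.support := fun h => hw (hPS w h)
    refine ⟨.cons hwu (P.1.concat hwv.symm), ?_, ?_⟩
    · refine (Walk.cons_isCycle_iff _ _).2 ⟨P.2.concat hwP _, ?_⟩
      rw [Walk.edges_concat, List.concat_eq_append, List.mem_append, List.mem_singleton]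
      rintro (h | h)
      · exact hwP (P.1.fst_mem_support_of_mem_edges h)
      · rcases Sym2.eq_iff.1 h with ⟨hwv', -⟩ | ⟨-, huv'⟩
        exacts [hwv.ne hwv', huv huv']
    · intro x hx
      simp only [Walk.support_cons, Walk.support_concat, List.mem_cons, List.mem_append,
        List.mem_nil_iff, or_false] at hx
      rcases hx with rfl | hx | rfl
      exacts [Set.mem_insert x S, Set.mem_insert_of_mem w (hPS x hx), Set.mem_insert x S]

variable {H : SimpleGraph β}

lemma Walk.support_ofBoxProdLeft_subset [DecidableEq β] [DecidableRel G.Adj] :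
    ∀ {x y : V × β} (p : (G □ H).Walk x y), p.ofBoxProdLeft.support ⊆ p.support.map Prod.fst
  | _, _, .nil => by simp [Walk.ofBoxProdLeft]
  | (a₁, _), _, .cons (v := (a₂, _)) h p => by
    have ih := p.support_ofBoxProdLeft_subset
    simp only [Walk.ofBoxProdLeft, Or.by_cases]
    split_ifs with hG
    · simp only [Walk.support_cons, List.map_cons]
      exact List.cons_subset_cons _ ih
    · -- an `H`-step, which `ofBoxProdLeft` turns into a cast along `a₁ = a₂`
      generalize_proofs e
      subst e
      exact List.subset_cons_of_subset _ ih

end SimpleGraph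

open SimpleGraph

theorem cycleConvex_iff {G : SimpleGraph V} {S : Set V} :
    CycleConvex G S ↔ ∀ w ∉ S, ∀ ⦃u v⦄, u ≠ v → G.Adj w u → G.Adj w v →
      ∀ p : G.Walk u v, ∃ x ∈ p.support, x ∉ S := by
  refine forall₂_congr fun w hw => ?_
  have := (exists_isCycle_induce_iff (G := G) (Set.mem_insert w S)).trans
    (exists_isCycle_insert_iff hw)
  rw [← not_iff_not]
  push Not
  exact this

theorem CycleConvex.exists_fst_notMem_support {G : SimpleGraph α} {H : SimpleGraph β}
    {S : Set α} (hS : CycleConvex G S) {a : α} {b : β} (ha : a ∉ S) {u v : α × β}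
    (huv : u ≠ v) (hu : (G □ H).Adj (a, b) u) (hv : (G □ H).Adj (a, b) v)
    (p : (G □ H).Walk u v) : ∃ x ∈ p.support, x.1 ∉ S := by
  by_contra! hpS
  have hadj : ∀ {z}, (G □ H).Adj (a, b) z → z.1 ∈ S → G.Adj a z.1 ∧ b = z.2 := fun hz hzS =>
    (boxProd_adj.1 hz).resolve_right fun h => ha (show (a, b).1 ∈ S from h.2 ▸ hzS)
  obtain ⟨hGu, hbu⟩ := hadj hu (hpS u p.start_mem_support)
  obtain ⟨hGv, hbv⟩ := hadj hv (hpS v p.end_mem_support)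
  have huv1 : u.1 ≠ v.1 := fun h => huv (Prod.ext h (hbu.symm.trans hbv))
  classical
  obtain ⟨x, hx, hxS⟩ := cycleConvex_iff.1 hS a ha huv1 hGu hGv p.ofBoxProdLeft
  obtain ⟨z, hz, rfl⟩ := List.mem_map.1 (p.support_ofBoxProdLeft_subset hx)
  exact hxS (hpS z hz)

theorem stmt_4_general (G : SimpleGraph α) (H : SimpleGraph β)
    (S : Set α) (T : Set β) (hS : CycleConvex G S) (hT : CycleConvex H T) :
    CycleConvex (G □ H) (S ×ˢ T) := by
  rw [cycleConvex_iff]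
  rintro ⟨a, b⟩ hw u v huv hu hv p
  simp only [Set.mem_prod, not_and_or] at hw
  rcases hw with ha | hb
  · obtain ⟨x, hx, hxS⟩ := hS.exists_fst_notMem_support ha huv hu hv p
    exact ⟨x, hx, fun h => hxS h.1⟩
  · let e := boxProdComm (G := G) (H := H)
    obtain ⟨x, hx, hxT⟩ := hT.exists_fst_notMem_support hb (Prod.swap_injective.ne huv)
      (e.map_adj_iff.2 hu) (e.map_adj_iff.2 hv) (p.map e.toHom)
    obtain ⟨y, hy, rfl⟩ := p.exists_mem_support_of_mem_support_map _ hx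
    exact ⟨y, hy, fun h => hxT h.2⟩

theorem stmt_4 [Fintype α] [Fintype β] (G : SimpleGraph α) (H : SimpleGraph β)
    [Nontrivial α] [Nontrivial β] (hG : G.Connected) (hH : H.Connected)
    (S : Set α) (T : Set β) (hS : CycleConvex G S) (hT : CycleConvex H T) :
    CycleConvex (G □ H) (S ×ˢ T) :=
  stmt_4_general G H S T hS hT
end

section
/- For any two nontrivial trees T₁ and T₂ with m and n vertices respectively, the cycle hull number of the Cartesian product T₁ □ T₂ equals m + n − 1. -/
open SimpleGraph

variable {V α β : Type*}

/-!
The cross `{a} × β ∪ α × {b}` has `m + n - 1` points and generates the whole grid: a cycle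
convex set containing three corners of a 4-cycle `(a, b), (a', b), (a', b'), (a, b')` of
`T₁ □ T₂` contains the fourth, and a double induction along walks to `a` and `b` fills the
grid.

Conversely, read `S ⊆ α × β` as the edge set of a bipartite graph on the rows `α` and the
columns `β`. The points whose row and column are connected in this graph form a cycle convex
set: a cycle through `w` leaves `w` along two distinct edges, and in a tree every walk between
two distinct neighbours of a vertex passes through that vertex, so projecting the rest of the
cycle to each factor shows that it meets both the row and the column of `w`. Hence if `S`
generates the grid, the bipartite graph on `m + n` vertices is connected and `|S| ≥ m + n - 1`.
-/

namespace SimpleGraph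

section Walks

variable {W : Type*} {G : SimpleGraph V} {H : SimpleGraph W}

lemma Walk.exists_walk_support_subset_map (f : V → W)
    (hf : ∀ x y, G.Adj x y → f x = f y ∨ H.Adj (f x) (f y)) {u v : V} (p : G.Walk u v) :
    ∃ q : H.Walk (f u) (f v), q.support ⊆ p.support.map f := by
  induction p with
  | nil => exact ⟨nil, by simp⟩
  | @cons x y z h p ih =>
    obtain ⟨q, hq⟩ := ih
    rcases hf x y h with hxy | hxy
    · refine ⟨q.copy hxy.symm rfl, ?_⟩
      simpa only [support_copy, support_cons, List.map_cons] using
        List.Subset.trans hq (List.subset_cons_self _ _)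
    · refine ⟨cons hxy q, ?_⟩
      simpa only [support_cons, List.map_cons] using List.cons_subset_cons _ hq

lemma IsAcyclic.mem_support_of_adj_of_adj (hG : G.IsAcyclic) {c u₁ u₂ : V}
    (h₁ : G.Adj c u₁) (h₂ : G.Adj c u₂) (hne : u₁ ≠ u₂) (p : G.Walk u₁ u₂) :
    c ∈ p.support := by
  classical
  have hpath : (Walk.cons h₁.symm .nil : G.Walk u₁ c).IsPath := by simpa using h₁.ne.symm
  refine p.support_bypass_subset_support <|
    hG.mem_support_of_ne_mem_support_of_adj_of_isPath p.bypass_isPath hpath h₂.symm ?_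
  simp [hne.symm, h₂.ne.symm]

lemma Walk.IsCycle.exists_walk_of_adj_of_adj {u : V} {c : G.Walk u u} (hc : c.IsCycle) :
    ∃ v₁ v₂, G.Adj u v₁ ∧ G.Adj u v₂ ∧ v₁ ≠ v₂ ∧
      ∃ p : G.Walk v₁ v₂, u ∉ p.support := by
  cases c with
  | nil => exact absurd hc Walk.not_isCycle_nil
  | cons h q =>
    have hnil := Walk.not_nil_of_isCycle_cons hc
    obtain ⟨hq, hedge⟩ := (Walk.cons_isCycle_iff q h).mp hc
    refine ⟨_, q.penultimate, h, (q.adj_penultimate hnil).symm, ?_, q.dropLast, ?_⟩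
    · intro hpen
      apply hedge
      have := q.mk_penultimate_end_mem_edges hnil
      rwa [← hpen, Sym2.eq_swap] at this
    · have := hq.support_nodup
      rw [← q.support_dropLast_concat hnil, List.nodup_append] at this
      exact fun hu => this.2.2 u hu u (List.mem_singleton_self u) rfl

lemma IsAcyclic.exists_mem_support_map_eq (hH : H.IsAcyclic) (f : V → W)
    (hf : ∀ x y, G.Adj x y → f x = f y ∨ H.Adj (f x) (f y)) {w v₁ v₂ : V}
    (h₁ : G.Adj w v₁) (h₂ : G.Adj w v₂) (hne : f v₁ ≠ f v₂) (p : G.Walk v₁ v₂) :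
    ∃ v ∈ p.support, f v = f w := by
  by_cases hw₁ : f v₁ = f w
  · exact ⟨v₁, p.start_mem_support, hw₁⟩
  by_cases hw₂ : f v₂ = f w
  · exact ⟨v₂, p.end_mem_support, hw₂⟩
  have hadj₁ := (hf w v₁ h₁).resolve_left (Ne.symm hw₁)
  have hadj₂ := (hf w v₂ h₂).resolve_left (Ne.symm hw₂)
  obtain ⟨q, hq⟩ := p.exists_walk_support_subset_map f hf
  simpa using hq (hH.mem_support_of_adj_of_adj hadj₁ hadj₂ hne q)

end Walks

section BoxProd

variable {G : SimpleGraph α} {H : SimpleGraph β}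

lemma boxProd_exists_mem_support_fst_eq (hG : G.IsAcyclic) {w v₁ v₂ : α × β}
    (h₁ : (G □ H).Adj w v₁) (h₂ : (G □ H).Adj w v₂) (hne : v₁ ≠ v₂)
    (p : (G □ H).Walk v₁ v₂) : ∃ v ∈ p.support, v.1 = w.1 := by
  by_cases hfst : v₁.1 = v₂.1
  · refine ⟨v₁, p.start_mem_support, ?_⟩
    by_contra hw
    rw [boxProd_adj] at h₁ h₂
    exact hne (Prod.ext hfst (by grind))
  · exact hG.exists_mem_support_map_eq Prod.fst
      (fun x y h => (boxProd_adj.mp h).symm.imp (·.2) (·.1)) h₁ h₂ hfst p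

lemma boxProd_exists_mem_support_snd_eq (hH : H.IsAcyclic) {w v₁ v₂ : α × β}
    (h₁ : (G □ H).Adj w v₁) (h₂ : (G □ H).Adj w v₂) (hne : v₁ ≠ v₂)
    (p : (G □ H).Walk v₁ v₂) : ∃ v ∈ p.support, v.2 = w.2 := by
  let e := boxProdComm G H
  obtain ⟨v, hv, hvw⟩ := boxProd_exists_mem_support_fst_eq hH (e.map_adj_iff.mpr h₁)
    (e.map_adj_iff.mpr h₂) (e.injective.ne hne) (p.map e.toHom)
  rw [Walk.support_map, List.mem_map] at hv
  obtain ⟨v, hv, rfl⟩ := hv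
  exact ⟨v, hv, hvw⟩

end BoxProd

end SimpleGraph

section CycleHull

variable {G : SimpleGraph α} {H : SimpleGraph β}

lemma CycleConvex.mem_of_square {T : Set (α × β)} (hT : CycleConvex (G □ H) T)
    {a a' : α} {b b' : β} (ha : G.Adj a a') (hb : H.Adj b b')
    (h₁ : (a', b) ∈ T) (h₂ : (a', b') ∈ T) (h₃ : (a, b') ∈ T) : (a, b) ∈ T := by
  by_contra h
  refine hT (a, b) h
    (.cons (v := ⟨(a', b), .inr h₁⟩) ?_ <| .cons (v := ⟨(a', b'), .inr h₂⟩) ?_ <|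
      .cons (v := ⟨(a, b'), .inr h₃⟩) ?_ <| .cons ?_ .nil) ?_
  all_goals simp [Walk.cons_isCycle_iff, Subtype.ext_iff, ha, hb, ha.symm, hb.symm, ha.ne,
    hb.ne, ha.ne.symm, hb.ne.symm]

lemma CycleConvex.mem_of_walk_of_walk {T : Set (α × β)} (hT : CycleConvex (G □ H) T)
    {a : α} {b : β} (hcross : {p : α × β | p.1 = a ∨ p.2 = b} ⊆ T) :
    ∀ {x : α} {y : β}, G.Walk x a → H.Walk y b → (x, y) ∈ T
  | _, _, .nil, _ => hcross (.inl rfl)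
  | _, _, .cons _ _, .nil => hcross (.inr rfl)
  | _, _, .cons hx p, .cons hy q =>
    hT.mem_of_square hx hy (hT.mem_of_walk_of_walk hcross p (.cons hy q))
      (hT.mem_of_walk_of_walk hcross p q) (hT.mem_of_walk_of_walk hcross (.cons hx p) q)

lemma cycleHull_cross_eq_univ (hG : G.Preconnected) (hH : H.Preconnected) (a : α) (b : β) :
    cycleHull (G □ H) {p | p.1 = a ∨ p.2 = b} = Set.univ :=
  Set.eq_univ_of_forall fun x => Set.mem_sInter.mpr fun _ ⟨hsub, hT⟩ =>
    hT.mem_of_walk_of_walk hsub (hG x.1 a).some (hH x.2 b).some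

lemma ncard_cross_add_one [Finite α] [Finite β] (a : α) (b : β) :
    {p : α × β | p.1 = a ∨ p.2 = b}.ncard + 1 = Nat.card α + Nat.card β := by
  have hcross : {p : α × β | p.1 = a ∨ p.2 = b} = {a} ×ˢ Set.univ ∪ Set.univ ×ˢ {b} := by
    ext; simp
  have hinter : ({a} ×ˢ Set.univ ∩ Set.univ ×ˢ {b} : Set (α × β)) = {(a, b)} := by
    ext; simp [and_comm, Prod.ext_iff]
  have := Set.ncard_union_add_ncard_inter ({a} ×ˢ (Set.univ : Set β)) (Set.univ ×ˢ {b})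
  rw [← hcross, hinter] at this
  simpa [Set.ncard_prod, add_comm] using this

def rowColumnGraph (S : Set (α × β)) : SimpleGraph (α ⊕ β) where
  Adj
    | .inl a, .inr b => (a, b) ∈ S
    | .inr b, .inl a => (a, b) ∈ S
    | _, _ => False
  symm := ⟨by rintro (a | b) (a' | b') h <;> exact h⟩
  loopless := ⟨by rintro (a | b) h <;> exact h⟩

def rowColumnClosure (S : Set (α × β)) : Set (α × β) :=
  {p | (rowColumnGraph S).Reachable (.inl p.1) (.inr p.2)}

lemma subset_rowColumnClosure (S : Set (α × β)) : S ⊆ rowColumnClosure S :=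
  fun _ hp => Adj.reachable hp

lemma rowColumnGraph_reachable_of_boxProd_adj {S : Set (α × β)} {x y : α × β}
    (hxy : (G □ H).Adj x y) (hx : x ∈ rowColumnClosure S) (hy : y ∈ rowColumnClosure S) :
    (rowColumnGraph S).Reachable (.inl x.1) (.inl y.1) := by
  rcases boxProd_adj.mp hxy with ⟨-, h₂⟩ | ⟨-, h₁⟩
  · exact hx.trans (h₂ ▸ hy.symm)
  · rw [h₁]

lemma rowColumnGraph_reachable_of_mem_support {S : Set (α × β)} {a b : α × β}
    (p : (G □ H).Walk a b) (hp : ∀ v ∈ p.support, v ∈ rowColumnClosure S) :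
    ∀ x ∈ p.support, (rowColumnGraph S).Reachable (.inl a.1) (.inl x.1) := by
  induction p with
  | nil => simp
  | @cons a c b h p ih =>
    simp only [Walk.support_cons, List.mem_cons, forall_eq_or_imp] at hp ⊢
    refine ⟨.rfl, fun x hx => ?_⟩
    exact (rowColumnGraph_reachable_of_boxProd_adj h hp.1 (hp.2 c p.start_mem_support)).trans
      (ih hp.2 x hx)

lemma rowColumnClosure_cycleConvex (hG : G.IsAcyclic) (hH : H.IsAcyclic) (S : Set (α × β)) :
    CycleConvex (G □ H) (rowColumnClosure S) := by
  intro w hw c hc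
  obtain ⟨v₁, v₂, h₁, h₂, hne, p, hwp⟩ := hc.exists_walk_of_adj_of_adj
  let P := p.map (Embedding.induce _).toHom
  have hP : ∀ v ∈ P.support, v ∈ rowColumnClosure S := by
    intro v hv
    simp only [P, Walk.support_map, List.mem_map] at hv
    obtain ⟨⟨v, hv'⟩, hvp, rfl⟩ := hv
    exact hv'.resolve_left fun h => hwp (by subst h; exact hvp)
  have hne' := Subtype.coe_injective.ne hne
  obtain ⟨x, hx, hxw⟩ := boxProd_exists_mem_support_fst_eq hG h₁ h₂ hne' P
  obtain ⟨y, hy, hyw⟩ := boxProd_exists_mem_support_snd_eq hH h₁ h₂ hne' P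
  have hreach := ((rowColumnGraph_reachable_of_mem_support P hP x hx).symm.trans
    (rowColumnGraph_reachable_of_mem_support P hP y hy)).trans (hP y hy)
  rw [hxw, hyw] at hreach
  exact hw hreach

lemma ncard_edgeSet_rowColumnGraph (S : Set (α × β)) :
    (rowColumnGraph S).edgeSet.ncard = S.ncard := by
  have : (rowColumnGraph S).edgeSet = (fun p => s(.inl p.1, .inr p.2)) '' S := by
    ext e
    induction e using Sym2.ind with
    | _ x y => rcases x with a | b <;> rcases y with a' | b' <;> simp [rowColumnGraph]
  rw [this, Set.ncard_image_of_injective]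
  intro p q h
  simpa [Prod.ext_iff] using h

lemma rowColumnGraph_connected [Nonempty α] [Nonempty β] {S : Set (α × β)}
    (hS : rowColumnClosure S = Set.univ) : (rowColumnGraph S).Connected := by
  have hreach (a : α) (b : β) : (rowColumnGraph S).Reachable (.inl a) (.inr b) :=
    show (a, b) ∈ rowColumnClosure S from hS ▸ Set.mem_univ _
  obtain ⟨a₀⟩ := ‹Nonempty α›
  obtain ⟨b₀⟩ := ‹Nonempty β›
  refine (connected_iff _).mpr ⟨?_, inferInstance⟩
  rintro (a | b) (a' | b')
  · exact (hreach a b₀).trans (hreach a' b₀).symm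
  · exact hreach a b'
  · exact (hreach a' b).symm
  · exact (hreach a₀ b).symm.trans (hreach a₀ b')

lemma card_sum_le_ncard_add_one_of_cycleHull_eq_univ [Nonempty α] [Nonempty β]
    (hG : G.IsAcyclic) (hH : H.IsAcyclic) {S : Set (α × β)}
    (hS : cycleHull (G □ H) S = Set.univ) : Nat.card (α ⊕ β) ≤ S.ncard + 1 := by
  have hclosure : rowColumnClosure S = Set.univ := Set.eq_univ_of_univ_subset <| hS ▸
    Set.sInter_subset_of_mem ⟨subset_rowColumnClosure S, rowColumnClosure_cycleConvex hG hH S⟩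
  have := (rowColumnGraph_connected hclosure).card_vert_le_card_edgeSet_add_one
  rwa [Nat.card_coe_set_eq, ncard_edgeSet_rowColumnGraph] at this

end CycleHull

theorem stmt_10_general [Fintype α] [Fintype β] (T₁ : SimpleGraph α) (T₂ : SimpleGraph β)
    (h₁ : T₁.IsTree) (h₂ : T₂.IsTree)
    (m n : ℕ) (hm : Fintype.card α = m) (hn : Fintype.card β = n) :
    cycleHullNumber (T₁ □ T₂) = m + n - 1 := by
  have : Nonempty α := h₁.connected.nonempty
  have : Nonempty β := h₂.connected.nonempty
  have hcross := cycleHull_cross_eq_univ h₁.connected.preconnected h₂.connected.preconnected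
    (Classical.arbitrary α) (Classical.arbitrary β)
  have hcard := ncard_cross_add_one (Classical.arbitrary α) (Classical.arbitrary β)
  simp only [Nat.card_eq_fintype_card, hm, hn] at hcard
  apply le_antisymm
  · exact Nat.sInf_le ⟨_, by omega, hcross⟩
  · refine le_csInf ⟨_, _, rfl, hcross⟩ ?_
    rintro k ⟨S, rfl, hS⟩
    have := card_sum_le_ncard_add_one_of_cycleHull_eq_univ h₁.isAcyclic h₂.isAcyclic hS
    rw [Nat.card_sum, Nat.card_eq_fintype_card, Nat.card_eq_fintype_card, hm, hn] at this
    omega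

theorem stmt_10 [Fintype α] [Fintype β] (T₁ : SimpleGraph α) (T₂ : SimpleGraph β)
    [Nontrivial α] [Nontrivial β] (h₁ : T₁.IsTree) (h₂ : T₂.IsTree)
    (m n : ℕ) (hm : Fintype.card α = m) (hn : Fintype.card β = n) :
    cycleHullNumber (T₁ □ T₂) = m + n - 1 :=
  stmt_10_general T₁ T₂ h₁ h₂ m n hm hn
end
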